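/- Fix g2, g3, b, B ∈ ℂ with B ≠ 0 and B² = r(b), where r(u) := 4u³ − g2·u − g3. Let H(u,v,w) := (uv+vw+wu+g2/4)² − (u+v+w)(4uvw−g3), h(u,v) := H(u,v,b)/B, let ∂₁h denote the derivative of h in its first argument, and define ρ(u,v,w) := h(u,v) − ((u−w)/2)·(∂₁h)(u,v). Let u_k, v_k : ℝ → ℂ (k ∈ ℤ) be differentiable functions, with each u_k twice differentiable, such that for all k ∈ ℤ and all t ∈ ℝ: u_{k+1}(t) − v_k(t) ≠ 0, u_k(t) − v_{k−1}(t) ≠ 0, and the Shabat–Yamilov equations hold: u̇_k = 2ρ(u_{k+1}, u_k, v_k)/(u_{k+1} − v_k) and v̇_k = 2ρ(u_k, v_k, v_{k−1})/(u_k − v_{k−1}). Then for all k and t at which h(u_k, u_{k+1}) ≠ 0, h(u_k, u_{k−1}) ≠ 0 and u̇_k² − r(u_k) ≠ 0, the rational form of the elliptic Ruijsenaars–Toda lattice holds: (2ü_k − r'(u_k)) / (u̇_k² − r(u_k)) = −u̇_{k+1}/h(u_k, u_{k+1}) + u̇_{k−1}/h(u_k, u_{k−1}) + (∂₁h)(u_k,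 u_{k+1})/h(u_k, u_{k+1}) + (∂₁h)(u_k, u_{k−1})/h(u_k, u_{k−1}). -/

import Mathlib

/-- The Weierstrass cubic polynomial `r(u) = 4u³ − g₂u − g₃`. -/
def weierstrassR (g2 g3 : ℂ) (u : ℂ) : ℂ := 4 * u ^ 3 - g2 * u - g3

/-- The symmetric polynomial `H(u,v,w)` encoding the addition theorem on the
elliptic curve `A² = r(a)`. -/
noncomputable def weierstrassH (g2 g3 u v w : ℂ) : ℂ :=
  (u * v + v * w + w * u + g2 / 4) ^ 2 - (u + v + w) * (4 * u * v * w - g3)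

/-- The symmetric biquadratic `h(u,v) = H(u,v,b)/B`. -/
noncomputable def biquadratic (g2 g3 b B u v : ℂ) : ℂ := weierstrassH g2 g3 u v b / B

/-- The derivative of the biquadratic `h` in its first argument. -/
noncomputable def biquadratic_d1 (g2 g3 b B u v : ℂ) : ℂ :=
  deriv (fun u' => biquadratic g2 g3 b B u' v) u

/-- The polarization `ρ(u,v,w) = h(u,v) − ((u−w)/2)·h_u(u,v)`, affine-linear
in `u` and `w`, with `ρ(u,v,u) = h(u,v)`. -/
noncomputable def biquadratic_rho (g2 g3 b B u v w : ℂ) : ℂ :=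
  biquadratic g2 g3 b B u v - (u - w) / 2 * biquadratic_d1 g2 g3 b B u v

/-- Partial derivative of `H(u,v,b)` in its first argument. -/
noncomputable def HdU (g2 g3 b u v : ℂ) : ℂ :=
  2*(u*v + v*b + b*u + g2/4)*(v+b) - (4*u*v*b - g3) - (u+v+b)*(4*v*b)

/-- Mixed second partial derivative of `H(u,v,b)`. -/
noncomputable def HdUV (g2 g3 b u v : ℂ) : ℂ :=
  2*(u+b)*(v+b) + 2*(u*v + v*b + b*u + g2/4) - 4*u*b - 4*v*b - (u+v+b)*(4*b)

lemma hasDerivAt_weierstrassH (g2 g3 b v u : ℂ) :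
    HasDerivAt (fun u' => weierstrassH g2 g3 u' v b) (HdU g2 g3 b u v) u := by
  have h := ((((((hasDerivAt_id u).mul_const v).add_const (v*b)).add
      ((hasDerivAt_id u).const_mul b)).add_const (g2/4)).pow 2).sub
      ((((hasDerivAt_id u).add_const v).add_const b).mul
        (((((hasDerivAt_id u).const_mul 4).mul_const v).mul_const b).sub_const g3))
  have hfun : (fun u' => weierstrassH g2 g3 u' v b) =
      (fun u' : ℂ => (u' * v + v * b + b * u' + g2 / 4) ^ 2
        - (u' + v + b) * (4 * u' * v * b - g3)) := rfl
  rw [hfun]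
  refine h.congr_deriv ?_
  simp only [HdU, id_eq, Pi.add_apply]
  push_cast
  ring

lemma biquadratic_d1_eq (g2 g3 b B u v : ℂ) :
    biquadratic_d1 g2 g3 b B u v = HdU g2 g3 b u v / B := by
  have h : HasDerivAt (fun u' => biquadratic g2 g3 b B u' v)
      (HdU g2 g3 b u v / B) u := (hasDerivAt_weierstrassH g2 g3 b v u).div_const B
  exact h.deriv

lemma deriv_weierstrassR (g2 g3 u : ℂ) :
    deriv (weierstrassR g2 g3) u = 12 * u ^ 2 - g2 := by
  have h : HasDerivAt (weierstrassR g2 g3) (12 * u ^ 2 - g2) u := by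
    have h := (((hasDerivAt_pow 3 u).const_mul (4:ℂ)).sub
      ((hasDerivAt_id u).const_mul g2)).sub_const g3
    have hfun : weierstrassR g2 g3 = (fun u' : ℂ => 4 * u' ^ 3 - g2 * u' - g3) := rfl
    rw [hfun]
    refine h.congr_deriv ?_
    push_cast
    ring
  exact h.deriv

lemma hasDerivAt_SY (g2 g3 b B : ℂ) {x y z : ℝ → ℂ} {x' y' z' : ℂ} {t : ℝ}
    (hx : HasDerivAt x x' t) (hy : HasDerivAt y y' t) (hz : HasDerivAt z z' t)
    (hden : B * (x t - z t) ≠ 0) :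
    HasDerivAt (fun s => (2 * weierstrassH g2 g3 (x s) (y s) b
        - (x s - z s) * HdU g2 g3 b (x s) (y s)) / (B * (x s - z s)))
      (((2 * (HdU g2 g3 b (x t) (y t) * x' + HdU g2 g3 b (y t) (x t) * y')
          - ((x' - z') * HdU g2 g3 b (x t) (y t)
             + (x t - z t) * ((2*(y t + b)^2 - 8*(y t)*b) * x'
                + HdUV g2 g3 b (x t) (y t) * y')))
          * (B * (x t - z t))
        - (2 * weierstrassH g2 g3 (x t) (y t) b
            - (x t - z t) * HdU g2 g3 b (x t) (y t)) * (B * (x' - z')))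
        / (B * (x t - z t)) ^ 2) t := by
  have hA : HasDerivAt (fun s => x s * y s + y s * b + b * x s + g2/4)
      (x' * y t + x t * y' + y' * b + b * x') t :=
    (((hx.mul hy).add (hy.mul_const b)).add (hx.const_mul b)).add_const (g2/4)
  have hS : HasDerivAt (fun s => x s + y s + b) (x' + y') t := (hx.add hy).add_const b
  have hM : HasDerivAt (fun s => 4 * x s * y s * b - g3)
      ((4 * x' * y t + 4 * x t * y') * b) t :=
    (((hx.const_mul 4).mul hy).mul_const b).sub_const g3
  have hHH := (hA.mul hA).sub (hS.mul hM)
  have hG := (((hA.const_mul 2).mul (hy.add_const b)).sub hM).sub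
      (hS.mul ((hy.const_mul 4).mul_const b))
  have hNum := (hHH.const_mul 2).sub ((hx.sub hz).mul hG)
  have hDen := (hx.sub hz).const_mul B
  have h := hNum.div hDen hden
  have hfun : (fun s => (2 * weierstrassH g2 g3 (x s) (y s) b
        - (x s - z s) * HdU g2 g3 b (x s) (y s)) / (B * (x s - z s))) =
      (fun s => (2 * ((x s * y s + y s * b + b * x s + g2/4)
            * (x s * y s + y s * b + b * x s + g2/4)
          - (x s + y s + b) * (4 * x s * y s * b - g3))
        - (x s - z s) * (2*(x s * y s + y s * b + b * x s + g2/4)*(y s + b)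
            - (4 * x s * y s * b - g3) - (x s + y s + b)*(4 * y s * b)))
        / (B * (x s - z s))) := by
    funext s; simp only [weierstrassH, HdU]; ring
  rw [hfun]
  refine h.congr_deriv ?_
  simp only [weierstrassH, HdU, HdUV, Pi.sub_apply, Pi.mul_apply, Pi.add_apply]
  ring
lemma keyIdentity (A1 A2 A3 D1 D2 D3 s1 s2 xd B : ℂ)
    (hp1 : A1 ≠ 0) (hp2 : A2 ≠ 0) (hp3 : A3 ≠ 0) (hB : B ≠ 0)
    (hs1 : s1 ≠ 0) (hs2 : s2 ≠ 0) :
    (-4*A2*xd*B + 4*A1*((2*A2 - s2*D2)/(B*s2))*B + 4*D1*A2 + 4*D2*A1) / (B^2*s1^2) /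
      (4*A1*A2/(B*s1)^2) =
    -xd/(A1/B) + ((2*A3 - s2*D3)/(B*s2))/(A3/B) + (D1/B)/(A1/B) + (D3/B)/(A3/B) := by
  have hK : B * s2 * A1^2 * A3 * (B⁻¹ * s2⁻¹ * A1⁻¹^2 * A3⁻¹) = 1 := by
    field_simp
  field_simp [hp1, hp2, hp3, hB, hs1, hs2]
  ring

set_option maxHeartbeats 1600000 in
/-- Elimination of the `v` variables from the Shabat–Yamilov lattice yields
the rational form of the elliptic Ruijsenaars–Toda lattice. -/
theorem shabatYamilov_to_ellipticRTL
    (g2 g3 b B : ℂ) (hB : B ≠ 0) (hcurve : B ^ 2 = weierstrassR g2 g3 b)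
    (u v : ℤ → ℝ → ℂ)
    (hu : ∀ k, Differentiable ℝ (u k))
    (hu' : ∀ k, Differentiable ℝ (deriv (u k)))
    (hv : ∀ k, Differentiable ℝ (v k))
    (hne1 : ∀ (k : ℤ) (t : ℝ), u (k + 1) t - v k t ≠ 0)
    (hne2 : ∀ (k : ℤ) (t : ℝ), u k t - v (k - 1) t ≠ 0)
    (hSY1 : ∀ (k : ℤ) (t : ℝ), deriv (u k) t =
      2 * biquadratic_rho g2 g3 b B (u (k + 1) t) (u k t) (v k t) /
        (u (k + 1) t - v k t))
    (hSY2 : ∀ (k : ℤ) (t : ℝ), deriv (v k) t =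
      2 * biquadratic_rho g2 g3 b B (u k t) (v k t) (v (k - 1) t) /
        (u k t - v (k - 1) t)) :
    ∀ (k : ℤ) (t : ℝ),
      biquadratic g2 g3 b B (u k t) (u (k + 1) t) ≠ 0 →
      biquadratic g2 g3 b B (u k t) (u (k - 1) t) ≠ 0 →
      (deriv (u k) t) ^ 2 - weierstrassR g2 g3 (u k t) ≠ 0 →
      (2 * deriv (deriv (u k)) t - deriv (weierstrassR g2 g3) (u k t)) /
          ((deriv (u k) t) ^ 2 - weierstrassR g2 g3 (u k t)) =
        -(deriv (u (k + 1)) t) / biquadratic g2 g3 b B (u k t) (u (k + 1) t)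
          + deriv (u (k - 1)) t / biquadratic g2 g3 b B (u k t) (u (k - 1) t)
          + biquadratic_d1 g2 g3 b B (u k t) (u (k + 1) t) /
              biquadratic g2 g3 b B (u k t) (u (k + 1) t)
          + biquadratic_d1 g2 g3 b B (u k t) (u (k - 1) t) /
              biquadratic g2 g3 b B (u k t) (u (k - 1) t) := by
  intro k t hbq1 hbq3 hne
  have hXZ : u (k + 1) t - v k t ≠ 0 := hne1 k t
  have hYXP : u k t - v (k - 1) t ≠ 0 := hne2 k t
  have hden : B * (u (k + 1) t - v k t) ≠ 0 := mul_ne_zero hB hXZ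
  have hden2 : B * (u k t - v (k - 1) t) ≠ 0 := mul_ne_zero hB hYXP
  -- rewrite the three lattice equations in polynomial form
  have e1 : deriv (u k) t * (B * (u (k + 1) t - v k t)) =
      2 * weierstrassH g2 g3 (u (k + 1) t) (u k t) b
        - (u (k + 1) t - v k t) * HdU g2 g3 b (u (k + 1) t) (u k t) := by
    rw [hSY1 k t]
    simp only [biquadratic_rho, biquadratic, biquadratic_d1_eq]
    field_simp
  have e2 : deriv (v k) t * (B * (u k t - v (k - 1) t)) =
      2 * weierstrassH g2 g3 (u k t) (v k t) b
        - (u k t - v (k - 1) t) * HdU g2 g3 b (u k t) (v k t) := by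
    rw [hSY2 k t]
    simp only [biquadratic_rho, biquadratic, biquadratic_d1_eq]
    field_simp
  have e3 : deriv (u (k - 1)) t * (B * (u k t - v (k - 1) t)) =
      2 * weierstrassH g2 g3 (u k t) (u (k - 1) t) b
        - (u k t - v (k - 1) t) * HdU g2 g3 b (u k t) (u (k - 1) t) := by
    have h3 := hSY1 (k - 1) t
    have hk : k - 1 + 1 = k := by ring
    rw [hk] at h3
    rw [h3]
    simp only [biquadratic_rho, biquadratic, biquadratic_d1_eq]
    field_simp
  -- the derivative of `u k` as an explicit rational function of the fields
  have hgu : deriv (u k) = (fun s => (2 * weierstrassH g2 g3 (u (k + 1) s) (u k s) b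
      - (u (k + 1) s - v k s) * HdU g2 g3 b (u (k + 1) s) (u k s))
      / (B * (u (k + 1) s - v k s))) := by
    funext s
    rw [hSY1 k s]
    simp only [biquadratic_rho, biquadratic, biquadratic_d1_eq]
    have hs : u (k + 1) s - v k s ≠ 0 := hne1 k s
    field_simp
  -- second derivative via the chain rule
  have hx := (hu (k + 1) t).hasDerivAt
  have hy := (hu k t).hasDerivAt
  have hz := (hv k t).hasDerivAt
  have hD := hasDerivAt_SY g2 g3 b B hx hy hz hden
  have Y''D : deriv (deriv (u k)) t * (B * (u (k + 1) t - v k t)) ^ 2 =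
      (2 * (HdU g2 g3 b (u (k + 1) t) (u k t) * deriv (u (k + 1)) t
            + HdU g2 g3 b (u k t) (u (k + 1) t) * deriv (u k) t)
          - ((deriv (u (k + 1)) t - deriv (v k) t) * HdU g2 g3 b (u (k + 1) t) (u k t)
             + (u (k + 1) t - v k t) * ((2*(u k t + b)^2 - 8*(u k t)*b) * deriv (u (k + 1)) t
                + HdUV g2 g3 b (u (k + 1) t) (u k t) * deriv (u k) t)))
          * (B * (u (k + 1) t - v k t))
        - (2 * weierstrassH g2 g3 (u (k + 1) t) (u k t) b
            - (u (k + 1) t - v k t) * HdU g2 g3 b (u (k + 1) t) (u k t))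
            * (B * (deriv (u (k + 1)) t - deriv (v k) t)) := by
    conv_lhs => rw [hgu, hD.deriv]
    exact div_mul_cancel₀ _ (pow_ne_zero 2 hden)
  -- the discriminant identity (squared lattice equation + curve equation)
  have e1sq : (deriv (u k) t) ^ 2 * (B * (u (k + 1) t - v k t)) ^ 2 =
      (2 * weierstrassH g2 g3 (u (k + 1) t) (u k t) b
        - (u (k + 1) t - v k t) * HdU g2 g3 b (u (k + 1) t) (u k t)) ^ 2 := by
    linear_combination (deriv (u k) t * (B * (u (k + 1) t - v k t))
      + (2 * weierstrassH g2 g3 (u (k + 1) t) (u k t) b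
        - (u (k + 1) t - v k t) * HdU g2 g3 b (u (k + 1) t) (u k t))) * e1
  have e6 : (deriv (u k) t) ^ 2 * (B * (u (k + 1) t - v k t)) ^ 2
        - weierstrassR g2 g3 (u k t) * (B * (u (k + 1) t - v k t)) ^ 2 =
      4 * weierstrassH g2 g3 (u k t) (u (k + 1) t) b
        * weierstrassH g2 g3 (u k t) (v k t) b := by
    have e1u := e1sq
    have hcu := hcurve
    simp only [weierstrassH, HdU, weierstrassR] at e1u hcu ⊢
    linear_combination e1u + (-(4 * (u k t)^3 - g2 * (u k t) - g3)
      * (u (k + 1) t - v k t)^2) * hcu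
  -- the key differentiated identity (rational elliptic RTL, one-sided)
  have hstar : (2 * deriv (deriv (u k)) t - (12 * (u k t) ^ 2 - g2))
        * (B ^ 2 * (u (k + 1) t - v k t) ^ 2) =
      -4 * weierstrassH g2 g3 (u k t) (v k t) b * deriv (u (k + 1)) t * B
        + 4 * weierstrassH g2 g3 (u k t) (u (k + 1) t) b * deriv (v k) t * B
        + 4 * HdU g2 g3 b (u k t) (u (k + 1) t) * weierstrassH g2 g3 (u k t) (v k t) b
        + 4 * HdU g2 g3 b (u k t) (v k t) * weierstrassH g2 g3 (u k t) (u (k + 1) t) b := by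
    have e1u := e1
    have hcu := hcurve
    have YDu := Y''D
    simp only [weierstrassH, HdU, HdUV, weierstrassR] at e1u hcu YDu ⊢
    linear_combination (2:ℂ) * YDu
      + (2*(2*(2*(u k t * u (k + 1) t + u (k + 1) t * b + b * u k t + g2/4) * (u (k + 1) t + b)
            - (4 * u k t * u (k + 1) t * b - g3) - (u k t + u (k + 1) t + b) * (4 * u (k + 1) t * b))
          - (u (k + 1) t - v k t) * (2*(u (k + 1) t + b)*(u k t + b)
            + 2*(u (k + 1) t * u k t + u k t * b + b * u (k + 1) t + g2/4)
            - 4 * u (k + 1) t * b - 4 * u k t * b - (u (k + 1) t + u k t + b) * (4*b)))) * e1u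
      + (-(12 * (u k t)^2 - g2) * (u (k + 1) t - v k t)^2) * hcu
  -- nonvanishing of the biquadratic factors
  have hp1 : weierstrassH g2 g3 (u k t) (u (k + 1) t) b ≠ 0 := by
    intro h0; exact hbq1 (by simp only [biquadratic, h0, zero_div])
  have hp3 : weierstrassH g2 g3 (u k t) (u (k - 1) t) b ≠ 0 := by
    intro h0; exact hbq3 (by simp only [biquadratic, h0, zero_div])
  have hYsq : (deriv (u k) t) ^ 2 - weierstrassR g2 g3 (u k t) =
      4 * weierstrassH g2 g3 (u k t) (u (k + 1) t) b
        * weierstrassH g2 g3 (u k t) (v k t) b / (B * (u (k + 1) t - v k t)) ^ 2 := by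
    rw [eq_div_iff (pow_ne_zero 2 hden)]
    linear_combination e6
  have hp2 : weierstrassH g2 g3 (u k t) (v k t) b ≠ 0 := by
    intro h0
    apply hne
    rw [hYsq, h0, mul_zero, zero_div]
  have hB2 : B ^ 2 * (u (k + 1) t - v k t) ^ 2 ≠ 0 :=
    mul_ne_zero (pow_ne_zero 2 hB) (pow_ne_zero 2 hXZ)
  have hY2 : 2 * deriv (deriv (u k)) t - (12 * (u k t) ^ 2 - g2) =
      (-4 * weierstrassH g2 g3 (u k t) (v k t) b * deriv (u (k + 1)) t * B
        + 4 * weierstrassH g2 g3 (u k t) (u (k + 1) t) b * deriv (v k) t * B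
        + 4 * HdU g2 g3 b (u k t) (u (k + 1) t) * weierstrassH g2 g3 (u k t) (v k t) b
        + 4 * HdU g2 g3 b (u k t) (v k t) * weierstrassH g2 g3 (u k t) (u (k + 1) t) b)
        / (B ^ 2 * (u (k + 1) t - v k t) ^ 2) := by
    rw [eq_div_iff hB2]
    linear_combination hstar
  have z'eq : deriv (v k) t = (2 * weierstrassH g2 g3 (u k t) (v k t) b
      - (u k t - v (k - 1) t) * HdU g2 g3 b (u k t) (v k t))
      / (B * (u k t - v (k - 1) t)) := by
    rw [eq_div_iff hden2]; exact e2
  have w'eq : deriv (u (k - 1)) t = (2 * weierstrassH g2 g3 (u k t) (u (k - 1) t) b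
      - (u k t - v (k - 1) t) * HdU g2 g3 b (u k t) (u (k - 1) t))
      / (B * (u k t - v (k - 1) t)) := by
    rw [eq_div_iff hden2]; exact e3
  -- final assembly
  rw [deriv_weierstrassR]
  simp only [biquadratic_d1_eq, biquadratic]
  rw [hY2, hYsq, z'eq, w'eq]
  exact keyIdentity (weierstrassH g2 g3 (u k t) (u (k + 1) t) b)
    (weierstrassH g2 g3 (u k t) (v k t) b)
    (weierstrassH g2 g3 (u k t) (u (k - 1) t) b)
    (HdU g2 g3 b (u k t) (u (k + 1) t)) (HdU g2 g3 b (u k t) (v k t))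
    (HdU g2 g3 b (u k t) (u (k - 1) t))
    (u (k + 1) t - v k t) (u k t - v (k - 1) t) (deriv (u (k + 1)) t) B
    hp1 hp2 hp3 hB hXZ hYXP
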